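/- For any finite simple graph G, |E(G)| ≤ h(T(G)), i.e., the number of edges of G is at most the primitive hole number of the total graph of G. -/

import Mathlib

/-- The primitive hole number of a simple graph: the number of triangles
(3-cliques) in the graph. -/
noncomputable def SimpleGraph.holeNumber {V : Type*} (G : SimpleGraph V) : ℕ :=
  {s : Finset V | G.IsNClique 3 s}.ncard

/-- The primitive degree of a vertex: the number of triangles (3-cliques)
of the graph containing that vertex. -/
noncomputable def SimpleGraph.primDegree {V : Type*} (G : SimpleGraph V) (v : V) : ℕ :=
  {s : Finset V | G.IsNClique 3 s ∧ v ∈ s}.ncard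

/-- The total graph of a simple graph `G`: vertices are the vertices and edges of `G`,
two of them adjacent iff the corresponding elements of `G` are adjacent or incident. -/
def SimpleGraph.totalGraph {V : Type*} (G : SimpleGraph V) :
    SimpleGraph (V ⊕ G.edgeSet) where
  Adj x y :=
    match x, y with
    | Sum.inl u, Sum.inl v => G.Adj u v
    | Sum.inl u, Sum.inr e => u ∈ (e : Sym2 V)
    | Sum.inr e, Sum.inl u => u ∈ (e : Sym2 V)
    | Sum.inr e, Sum.inr f => e ≠ f ∧ ∃ v, v ∈ (e : Sym2 V) ∧ v ∈ (f : Sym2 V)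
  symm := ⟨by
    rintro (u | e) (v | f) h
    · exact G.adj_symm h
    · exact h
    · exact h
    · exact ⟨h.1.symm, h.2.imp fun v hv => ⟨hv.2, hv.1⟩⟩⟩
  loopless := ⟨by
    rintro (u | e) h
    · exact G.irrefl h
    · exact h.1 rfl⟩

/-!
Every edge `e = uv` of `G` spans the triangle `{u, v, e}` of the total graph, and distinct edges
give distinct triangles since the triangle of `e` contains `e` as its only edge-vertex.
-/

namespace SimpleGraph

variable {V : Type*} (G : SimpleGraph V)

theorem card_le_holeNumber_of_injective {W ι : Type*} [Finite W] {H : SimpleGraph W}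
    (f : ι → Finset W) (hf : Function.Injective f) (hclique : ∀ i, H.IsNClique 3 (f i)) :
    Nat.card ι ≤ H.holeNumber := by
  rw [holeNumber, ← Nat.card_coe_set_eq]
  exact Nat.card_le_card_of_injective (fun i => ⟨f i, hclique i⟩)
    fun i j hij => hf (congrArg Subtype.val hij)

def edgeTriangle [DecidableEq V] (e : G.edgeSet) : Finset (V ⊕ G.edgeSet) :=
  insert (Sum.inr e) ((e : Sym2 V).toFinset.map Function.Embedding.inl)

variable {G} [DecidableEq V]

theorem isNClique_edgeTriangle (e : G.edgeSet) : G.totalGraph.IsNClique 3 (G.edgeTriangle e) := by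
  obtain ⟨e, he⟩ := e
  induction e using Sym2.ind with
  | h u v =>
    rw [edgeTriangle, Sym2.toFinset_mk_eq, Finset.map_insert, Finset.map_singleton,
      is3Clique_triple_iff]
    exact ⟨Sym2.mem_mk_left u v, Sym2.mem_mk_right u v, he⟩

theorem inr_mem_edgeTriangle_iff {e f : G.edgeSet} :
    Sum.inr f ∈ G.edgeTriangle e ↔ f = e := by
  simp [edgeTriangle]

theorem edgeTriangle_injective : Function.Injective G.edgeTriangle := fun _ _ hef =>
  (inr_mem_edgeTriangle_iff.1 (hef ▸ inr_mem_edgeTriangle_iff.2 rfl)).symm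

end SimpleGraph

/-- For any finite simple graph `G`, `|E(G)| ≤ h(T(G))`. -/
theorem card_edgeSet_le_holeNumber_totalGraph {V : Type*} [Fintype V]
    (G : SimpleGraph V) : G.edgeSet.ncard ≤ G.totalGraph.holeNumber := by
  classical
  rw [← Nat.card_coe_set_eq]
  exact SimpleGraph.card_le_holeNumber_of_injective G.edgeTriangle
    SimpleGraph.edgeTriangle_injective SimpleGraph.isNClique_edgeTriangle
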